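/- Define the operators C = (1/2) Σ_{⟨xy⟩} (−1)^x ( S¹_x S²_y − S²_x S¹_y ) (well defined on unordered nearest-neighbor pairs since the summand is invariant under swapping x and y, because (−1)^y = −(−1)^x), W = Σ_{x∈Λ} ( 1/2 + (−1)^x S³_x ), and H₀ = −Σ_{⟨xy⟩} ( S¹_x S¹_y + S²_x S²_y ). Then [C, W] = i·H₀. -/

import Mathlib

/-!
Common setup: the hard-core Bose lattice gas (XY model with staggered field) of
Aizenman–Lieb–Seiringer–Solovej–Yngvason on the torus `Λ = (ℤ/Lℤ)^d`.
The Hilbert space `⊗_{x∈Λ} ℂ²` is realized as matrices indexed by spin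
configurations `Λ → Bool` (with `true` = spin up), and the spin-1/2 operators
`Sⁱ_x` act as half the Pauli matrices on the factor at `x`.
-/

open scoped BigOperators
open Matrix MeasureTheory

noncomputable section

/-- Sites of the torus lattice `(ℤ/Lℤ)^d`. -/
abbrev Site (d L : ℕ) := Fin d → ZMod L

/-- Spin configurations: one two-level factor per site. -/
abbrev Cfg (d L : ℕ) := Site d L → Bool

/-- Operators on the `2^(L^d)`-dimensional Hilbert space `⊗_{x∈Λ} ℂ²`,
represented as matrices in the standard product basis. -/
abbrev Op (d L : ℕ) [NeZero L] := Matrix (Cfg d L) (Cfg d L) ℂ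

/-- Entries of the Pauli matrix σ¹ (basis label `true` = spin up). -/
def pauli1 (a b : Bool) : ℂ := if a = b then 0 else 1

/-- Entries of the Pauli matrix σ². -/
def pauli2 (a b : Bool) : ℂ := if a = b then 0 else if b then Complex.I else -Complex.I

/-- Entries of the Pauli matrix σ³. -/
def pauli3 (a b : Bool) : ℂ := if a = b then (if a then 1 else -1) else 0

variable (d L : ℕ) [NeZero L]

/-- The one-site spin operator `(1/2)·σ` acting at site `x` (identity on the other factors). -/
def spinOp (p : Bool → Bool → ℂ) (x : Site d L) : Op d L :=
  fun σ τ => if Function.update σ x (τ x) = τ then (1/2 : ℂ) * p (σ x) (τ x) else 0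

/-- `S¹_x`. -/
def S1 (x : Site d L) : Op d L := spinOp d L pauli1 x
/-- `S²_x`. -/
def S2 (x : Site d L) : Op d L := spinOp d L pauli2 x
/-- `S³_x`. -/
def S3 (x : Site d L) : Op d L := spinOp d L pauli3 x

/-- `S⁺_x = S¹_x + i S²_x`. -/
def Splus (x : Site d L) : Op d L := S1 d L x + Complex.I • S2 d L x
/-- `S⁻_x = S¹_x − i S²_x`. -/
def Sminus (x : Site d L) : Op d L := S1 d L x - Complex.I • S2 d L x

/-- The sign `(−1)^x = (−1)^{x₁+⋯+x_d}`. -/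
def stag (x : Site d L) : ℂ := (-1) ^ (∑ i, (x i).val)

/-- The unit lattice vector in direction `i`. -/
def eVec (i : Fin d) : Site d L := fun j => if j = i then 1 else 0

/-- The Hamiltonian of the hard-core lattice gas,
`H = −Σ_{⟨xy⟩}(S¹_xS¹_y + S²_xS²_y) + λ Σ_x (1/2 + (−1)^x S³_x)`,
the nearest-neighbor pairs `⟨xy⟩` being enumerated as `(x, x+eᵢ)`. -/
def ham (lam : ℝ) : Op d L :=
  -(∑ x : Site d L, ∑ i : Fin d,
      (S1 d L x * S1 d L (x + eVec d L i) + S2 d L x * S2 d L (x + eVec d L i)))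
  + (lam : ℂ) • ∑ x : Site d L, ((1/2 : ℂ) • (1 : Op d L) + stag d L x • S3 d L x)

/-- The Gibbs operator `e^{−βH}`. -/
def gibbs (lam β : ℝ) : Op d L := NormedSpace.exp ((-(β : ℂ)) • ham d L lam)

/-- Thermal expectation `⟨A⟩ = Tr(A e^{−βH})/Tr(e^{−βH})`. -/
def thermAvg (lam β : ℝ) (A : Op d L) : ℂ :=
  (A * gibbs d L lam β).trace / (gibbs d L lam β).trace

/-- The one-particle density matrix `γ(x,y) = ⟨S⁺_x S⁻_y⟩`. -/
def opdm (lam β : ℝ) (x y : Site d L) : ℂ :=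
  thermAvg d L lam β (Splus d L x * Sminus d L y)

/-- The total third spin component `S³_tot = Σ_x S³_x`. -/
def S3tot : Op d L := ∑ x : Site d L, S3 d L x

/-- The lowest eigenvalue `E_k` of `H` restricted to the sector `S³_tot = k`
(particle number `|Λ|/2 + k`): the least `μ` possessing a joint eigenvector. -/
def sectorEnergy (lam : ℝ) (k : ℤ) : ℝ :=
  sInf {μ : ℝ | ∃ ψ : Cfg d L → ℂ, ψ ≠ 0 ∧ (ham d L lam).mulVec ψ = (μ : ℂ) • ψ ∧
    (S3tot d L).mulVec ψ = (k : ℂ) • ψ}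

/-- The lowest eigenvalue of `H` (absolute ground state energy). -/
def groundEnergy (lam : ℝ) : ℝ :=
  sInf {μ : ℝ | ∃ ψ : Cfg d L → ℂ, ψ ≠ 0 ∧ (ham d L lam).mulVec ψ = (μ : ℂ) • ψ}

end

noncomputable section

/-- `C = (1/2) Σ_{⟨xy⟩} (−1)^x (S¹_x S²_y − S²_x S¹_y)` (pairs enumerated as `(x, x+eᵢ)`). -/
def Cop (d L : ℕ) [NeZero L] : Op d L :=
  (1/2 : ℂ) • ∑ x : Site d L, ∑ i : Fin d,
    stag d L x • (S1 d L x * S2 d L (x + eVec d L i) - S2 d L x * S1 d L (x + eVec d L i))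

/-- `W = Σ_x (1/2 + (−1)^x S³_x)`. -/
def Wop (d L : ℕ) [NeZero L] : Op d L :=
  ∑ x : Site d L, ((1/2 : ℂ) • (1 : Op d L) + stag d L x • S3 d L x)

/-- `H₀ = −Σ_{⟨xy⟩}(S¹_x S¹_y + S²_x S²_y)`. -/
def ham0 (d L : ℕ) [NeZero L] : Op d L :=
  -(∑ x : Site d L, ∑ i : Fin d,
      (S1 d L x * S1 d L (x + eVec d L i) + S2 d L x * S2 d L (x + eVec d L i)))

/-!
On one site the spin matrices satisfy `[S¹, S³] = -i S²` and `[S², S³] = i S¹`, and operators on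
different sites commute. Hence the bond current `B_xy = S¹_x S²_y - S²_x S¹_y` satisfies
`[B_xy, S³_x] = -i K_xy`, `[B_xy, S³_y] = i K_xy` with `K_xy = S¹_x S¹_y + S²_x S²_y`, and commutes
with every other `S³_z`, so `[B_xy, W] = i ((-1)^y - (-1)^x) K_xy`. On a torus of even side the
staggering sign flips along every bond, so each term `(-1)^x B_xy` of `2C` contributes
`-2i K_xy`, and summing over bonds gives `[C, W] = -i Σ K = i H₀`.
-/

open Function

section SiteOperators

variable {ι α R : Type*} [Fintype ι] [DecidableEq ι] [DecidableEq α] [CommSemiring R]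

/-- `f` acting on the tensor factor at `x` of `⨂_{x : ι} R^α`, in the product basis `ι → α`. -/
def siteOp (f : Matrix α α R) (x : ι) : Matrix (ι → α) (ι → α) R :=
  Matrix.of fun σ τ => if update σ x (τ x) = τ then f (σ x) (τ x) else 0

lemma siteOp_smul (c : R) (f : Matrix α α R) (x : ι) : siteOp (c • f) x = c • siteOp f x := by
  ext σ τ
  simp [siteOp]

variable [Fintype α]

lemma sum_ite_update_eq {M : Type*} [AddCommMonoid M] (σ : ι → α) (x : ι) (F : (ι → α) → M) :
    (∑ ρ, if update σ x (ρ x) = ρ then F ρ else 0) = ∑ b, F (update σ x b) := by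
  have hfilter : ({ρ | update σ x (ρ x) = ρ} : Finset (ι → α)) =
      Finset.univ.image (update σ x) := by
    ext ρ
    simp only [Finset.mem_filter, Finset.mem_univ, true_and, Finset.mem_image]
    exact ⟨fun h => ⟨ρ x, h⟩, fun ⟨b, hb⟩ => by rw [← hb, update_self]⟩
  rw [← Finset.sum_filter, hfilter, Finset.sum_image fun a _ b _ h => update_injective σ x h]

lemma siteOp_mul_apply (f g : Matrix α α R) (x y : ι) (σ τ : ι → α) :
    (siteOp f x * siteOp g y) σ τ = ∑ b, f (σ x) b * siteOp g y (update σ x b) τ := by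
  rw [Matrix.mul_apply]
  simp only [siteOp, Matrix.of_apply, ite_mul, zero_mul]
  rw [sum_ite_update_eq]
  simp only [update_self]

lemma siteOp_mul_siteOp_self (f g : Matrix α α R) (x : ι) :
    siteOp f x * siteOp g x = siteOp (f * g) x := by
  ext σ τ
  rw [siteOp_mul_apply]
  simp only [siteOp, Matrix.of_apply, update_idem, update_self, mul_ite, mul_zero,
    Finset.sum_ite_irrel, Finset.sum_const_zero, Matrix.mul_apply]

lemma siteOp_mul_siteOp_apply_of_ne {x y : ι} (hxy : x ≠ y) (f g : Matrix α α R)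
    (σ τ : ι → α) :
    (siteOp f x * siteOp g y) σ τ =
      if update (update σ x (τ x)) y (τ y) = τ then f (σ x) (τ x) * g (σ y) (τ y) else 0 := by
  rw [siteOp_mul_apply, Finset.sum_eq_single (τ x)]
  · simp only [siteOp, Matrix.of_apply, update_of_ne hxy.symm, mul_ite, mul_zero]
  · intro b _ hb
    have : ¬ update (update σ x b) y (τ y) = τ := fun h => hb (by
      rw [← h, update_of_ne hxy, update_self])
    simp [siteOp, this]
  · simp

lemma commute_siteOp_of_ne {x y : ι} (hxy : x ≠ y) (f g : Matrix α α R) :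
    Commute (siteOp f x) (siteOp g y) := by
  ext σ τ
  rw [siteOp_mul_siteOp_apply_of_ne hxy, siteOp_mul_siteOp_apply_of_ne hxy.symm,
    update_comm hxy, mul_comm]

end SiteOperators

section SiteOperatorBrackets

variable {ι α R : Type*} [Fintype ι] [DecidableEq ι] [DecidableEq α] [CommRing R]

lemma siteOp_sub (f g : Matrix α α R) (x : ι) : siteOp (f - g) x = siteOp f x - siteOp g x := by
  ext σ τ
  simp only [siteOp, Matrix.of_apply, Matrix.sub_apply]
  split_ifs <;> simp

lemma lie_siteOp_self [Fintype α] (f g : Matrix α α R) (x : ι) :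
    ⁅siteOp f x, siteOp g x⁆ = siteOp ⁅f, g⁆ x := by
  simp only [Ring.lie_def, siteOp_mul_siteOp_self, siteOp_sub]

end SiteOperatorBrackets

lemma mul_lie {A : Type*} [Ring A] (a b c : A) : ⁅a * b, c⁆ = a * ⁅b, c⁆ + ⁅a, c⁆ * b := by
  simp only [Ring.lie_def, mul_sub, sub_mul, mul_assoc]
  abel

open Complex

lemma lie_halfPauli1_halfPauli3 :
    ⁅(1 / 2 : ℂ) • Matrix.of pauli1, (1 / 2 : ℂ) • Matrix.of pauli3⁆ =
      -I • (1 / 2 : ℂ) • Matrix.of pauli2 := by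
  ext a b
  cases a <;> cases b <;> simp [Ring.lie_def, Matrix.mul_apply, pauli1, pauli2, pauli3] <;>
    ring_nf <;> norm_num [I_sq]

lemma lie_halfPauli2_halfPauli3 :
    ⁅(1 / 2 : ℂ) • Matrix.of pauli2, (1 / 2 : ℂ) • Matrix.of pauli3⁆ =
      I • (1 / 2 : ℂ) • Matrix.of pauli1 := by
  ext a b
  cases a <;> cases b <;> simp [Ring.lie_def, Matrix.mul_apply, pauli1, pauli2, pauli3] <;> ring

section Spins

variable {d L : ℕ} [NeZero L]

lemma spinOp_eq_siteOp (p : Bool → Bool → ℂ) (x : Site d L) :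
    spinOp d L p x = siteOp ((1 / 2 : ℂ) • Matrix.of p) x := by
  ext σ τ
  simp [spinOp, siteOp]

lemma commute_spinOp_of_ne (p q : Bool → Bool → ℂ) {x y : Site d L} (hxy : x ≠ y) :
    Commute (spinOp d L p x) (spinOp d L q y) := by
  rw [spinOp_eq_siteOp, spinOp_eq_siteOp]
  exact commute_siteOp_of_ne hxy _ _

lemma lie_S1_S3_self (x : Site d L) : ⁅S1 d L x, S3 d L x⁆ = -I • S2 d L x := by
  rw [S1, S2, S3, spinOp_eq_siteOp, spinOp_eq_siteOp, spinOp_eq_siteOp, lie_siteOp_self,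
    lie_halfPauli1_halfPauli3, siteOp_smul]

lemma lie_S2_S3_self (x : Site d L) : ⁅S2 d L x, S3 d L x⁆ = I • S1 d L x := by
  rw [S1, S2, S3, spinOp_eq_siteOp, spinOp_eq_siteOp, spinOp_eq_siteOp, lie_siteOp_self,
    lie_halfPauli2_halfPauli3, siteOp_smul]

end Spins

attribute [local instance] LieRing.ofAssociativeRing

section Bonds

variable {d L : ℕ} [NeZero L]

def bondCurrent (x y : Site d L) : Op d L := S1 d L x * S2 d L y - S2 d L x * S1 d L y

def hopping (x y : Site d L) : Op d L := S1 d L x * S1 d L y + S2 d L x * S2 d L y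

lemma lie_bondCurrent_S3_left {x y : Site d L} (hxy : x ≠ y) :
    ⁅bondCurrent x y, S3 d L x⁆ = -I • hopping x y := by
  have h1 : ⁅S1 d L y, S3 d L x⁆ = 0 := (commute_spinOp_of_ne _ _ hxy.symm).lie_eq
  have h2 : ⁅S2 d L y, S3 d L x⁆ = 0 := (commute_spinOp_of_ne _ _ hxy.symm).lie_eq
  rw [bondCurrent, hopping, sub_lie, mul_lie, mul_lie, h1, h2, lie_S1_S3_self, lie_S2_S3_self]
  simp only [mul_zero, zero_add, smul_mul_assoc]
  module

lemma lie_bondCurrent_S3_right {x y : Site d L} (hxy : x ≠ y) :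
    ⁅bondCurrent x y, S3 d L y⁆ = I • hopping x y := by
  have h1 : ⁅S1 d L x, S3 d L y⁆ = 0 := (commute_spinOp_of_ne _ _ hxy).lie_eq
  have h2 : ⁅S2 d L x, S3 d L y⁆ = 0 := (commute_spinOp_of_ne _ _ hxy).lie_eq
  rw [bondCurrent, hopping, sub_lie, mul_lie, mul_lie, h1, h2, lie_S1_S3_self, lie_S2_S3_self]
  simp only [zero_mul, add_zero, mul_smul_comm]
  module

lemma lie_bondCurrent_S3_of_ne {x y z : Site d L} (hzx : z ≠ x) (hzy : z ≠ y) :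
    ⁅bondCurrent x y, S3 d L z⁆ = 0 := by
  refine Commute.lie_eq (Commute.sub_left ?_ ?_) <;>
    exact (commute_spinOp_of_ne _ _ hzx.symm).mul_left (commute_spinOp_of_ne _ _ hzy.symm)

lemma lie_bondCurrent_Wop {x y : Site d L} (hxy : x ≠ y) :
    ⁅bondCurrent x y, Wop d L⁆ = (I * (stag d L y - stag d L x)) • hopping x y := by
  have hconst : ⁅bondCurrent x y, (1 : Op d L)⁆ = 0 := (Commute.one_right _).lie_eq
  simp only [Wop, lie_sum, lie_add, lie_smul, hconst, smul_zero, zero_add]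
  rw [Fintype.sum_eq_add x y hxy fun z hz => by
      rw [lie_bondCurrent_S3_of_ne hz.1 hz.2, smul_zero],
    lie_bondCurrent_S3_left hxy, lie_bondCurrent_S3_right hxy, smul_smul, smul_smul, ← add_smul]
  congr 1
  ring

end Bonds

lemma neg_one_pow_mod_of_even {R : Type*} [Ring R] {L : ℕ} (hL : Even L) (m : ℕ) :
    (-1 : R) ^ (m % L) = (-1) ^ m := by
  rw [neg_one_pow_eq_pow_mod_two, Nat.mod_mod_of_dvd _ hL.two_dvd, ← neg_one_pow_eq_pow_mod_two]

section Staggering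

variable {d L : ℕ}

lemma stag_eq_prod (x : Site d L) : stag d L x = ∏ j, (-1) ^ (x j).val :=
  (Finset.prod_pow_eq_pow_sum _ _ _).symm

lemma stag_add [NeZero L] (hL : Even L) (x y : Site d L) :
    stag d L (x + y) = stag d L x * stag d L y := by
  simp only [stag_eq_prod, ← Finset.prod_mul_distrib, ← pow_add, Pi.add_apply, ZMod.val_add,
    neg_one_pow_mod_of_even hL]

lemma stag_eVec (hL : Even L) (i : Fin d) : stag d L (eVec d L i) = -1 := by
  rw [stag_eq_prod, Fintype.prod_eq_single i fun j hj => by simp [eVec, hj]]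
  simp [eVec, ZMod.val_one_eq_one_mod, neg_one_pow_mod_of_even hL]

lemma stag_add_eVec [NeZero L] (hL : Even L) (x : Site d L) (i : Fin d) :
    stag d L (x + eVec d L i) = -stag d L x := by
  rw [stag_add hL, stag_eVec hL, mul_neg_one]

lemma stag_mul_self (x : Site d L) : stag d L x * stag d L x = 1 := by
  rw [stag, ← mul_pow]
  simp

lemma ne_add_eVec (hL : Even L) (x : Site d L) (i : Fin d) : x ≠ x + eVec d L i := by
  intro h
  have h1 : (1 : ZMod L) = 0 := by simpa [eVec] using congrFun h i
  obtain ⟨k, rfl⟩ := hL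
  rw [ZMod.one_eq_zero_iff] at h1
  omega

end Staggering

theorem commutator_CW_general (d L : ℕ) [NeZero L] (hL : Even L) :
    Cop d L * Wop d L - Wop d L * Cop d L = Complex.I • ham0 d L := by
  have hC : Cop d L = (1 / 2 : ℂ) • ∑ x, ∑ i, stag d L x • bondCurrent x (x + eVec d L i) := rfl
  have hH : ham0 d L = -∑ x, ∑ i, hopping x (x + eVec d L i) := rfl
  have hbond (x : Site d L) (i : Fin d) :
      stag d L x • ⁅bondCurrent x (x + eVec d L i), Wop d L⁆ =
        (-2 * I) • hopping x (x + eVec d L i) := by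
    rw [lie_bondCurrent_Wop (ne_add_eVec hL x i), stag_add_eVec hL, smul_smul]
    congr 1
    linear_combination (-2 * I) * stag_mul_self x
  rw [← Ring.lie_def, hC, hH, smul_lie]
  simp only [sum_lie, smul_lie, hbond]
  simp only [← Finset.smul_sum]
  module

/-- The commutator identity `[C, W] = i·H₀`. -/
theorem commutator_CW (d L : ℕ) [NeZero L] (hd : 1 ≤ d) (hL : Even L) (hL2 : 2 ≤ L) :
    Cop d L * Wop d L - Wop d L * Cop d L = Complex.I • ham0 d L :=
  commutator_CW_general d L hL

end
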